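/- arXiv:2402.06827 — 3 statements merged into one kernel-verified Lean document; each statement's English description precedes it below -/
import Mathlib

section
/- Let E be a real Hilbert space and f : E → ℝ a differentiable function whose gradient ∇f : E → E is γ-Lipschitz for some γ > 0. Then for every θ, v ∈ E and every step size μ with 0 < μ ≤ 1/γ, one has f(θ − μ·v) − f(θ) ≤ −(μ/2)·(‖∇f(θ)‖² − ‖v − ∇f(θ)‖²). (Pointwise core of Theorem A.2, 'error of one gradient step'.) -/
/-!
With `d = -μ • v`, the descent lemma `f (θ + d) ≤ f θ + ⟪∇f θ, d⟫ + γ/2 ‖d‖²` and `γ μ ≤ 1` give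
`f (θ - μ • v) - f θ ≤ -μ ⟪∇f θ, v⟫ + μ/2 ‖v‖²`, and the right-hand side is exactly
`-(μ/2) (‖∇f θ‖² - ‖v - ∇f θ‖²)` by expanding the square.
The descent lemma itself compares `t ↦ f (x + t • d) - f x - t f'(x) d`, whose derivative is at most
`γ t ‖d‖²`, with the parabola `t ↦ γ/2 t² ‖d‖²` on `[0, 1]`.
-/

open InnerProductSpace Set

section Descent

variable {E : Type*} [NormedAddCommGroup E] [NormedSpace ℝ E] {f : E → ℝ}

lemma hasDerivAt_comp_add_smul (hf : Differentiable ℝ f) (x d : E) (t : ℝ) :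
    HasDerivAt (fun s : ℝ => f (x + s • d)) (fderiv ℝ f (x + t • d) d) t := by
  have hline : HasDerivAt (fun s : ℝ => x + s • d) d t := by
    simpa using ((hasDerivAt_id t).smul_const d).const_add x
  exact (hf _).hasFDerivAt.comp_hasDerivAt t hline

theorem sub_le_fderiv_add_of_lipschitz_fderiv (hf : Differentiable ℝ f) {γ : ℝ}
    (hlip : ∀ x y, ‖fderiv ℝ f x - fderiv ℝ f y‖ ≤ γ * ‖x - y‖) (x d : E) :
    f (x + d) - f x ≤ fderiv ℝ f x d + γ / 2 * ‖d‖ ^ 2 := by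
  set φ : ℝ → ℝ := fun t => f (x + t • d) - f x - t * fderiv ℝ f x d
  set B : ℝ → ℝ := fun t => γ / 2 * ‖d‖ ^ 2 * t ^ 2
  have hφ : ∀ t, HasDerivAt φ (fderiv ℝ f (x + t • d) d - fderiv ℝ f x d) t := fun t =>
    ((hasDerivAt_comp_add_smul hf x d t).sub_const (f x)).sub (hasDerivAt_mul_const _)
  have hB : ∀ t, HasDerivAt B (γ * ‖d‖ ^ 2 * t) t := fun t =>
    ((hasDerivAt_pow 2 t).const_mul (γ / 2 * ‖d‖ ^ 2)).congr_deriv (by push_cast; ring)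
  have hbound : ∀ t ∈ Ico (0 : ℝ) 1,
      fderiv ℝ f (x + t • d) d - fderiv ℝ f x d ≤ γ * ‖d‖ ^ 2 * t := by
    rintro t ⟨ht, -⟩
    calc fderiv ℝ f (x + t • d) d - fderiv ℝ f x d
        = (fderiv ℝ f (x + t • d) - fderiv ℝ f x) d := rfl
      _ ≤ ‖fderiv ℝ f (x + t • d) - fderiv ℝ f x‖ * ‖d‖ :=
        (Real.le_norm_self _).trans (ContinuousLinearMap.le_opNorm _ _)
      _ ≤ γ * ‖x + t • d - x‖ * ‖d‖ := by gcongr; exact hlip _ _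
      _ = γ * ‖d‖ ^ 2 * t := by
        rw [add_sub_cancel_left, norm_smul, Real.norm_of_nonneg ht]; ring
  have hφB := image_le_of_deriv_right_le_deriv_boundary
    (fun t _ => (hφ t).continuousAt.continuousWithinAt) (fun t _ => (hφ t).hasDerivWithinAt)
    (by simp [φ, B]) (fun t _ => (hB t).continuousAt.continuousWithinAt)
    (fun t _ => (hB t).hasDerivWithinAt) hbound (right_mem_Icc.mpr zero_le_one)
  simp only [φ, B, one_smul, one_mul, one_pow, mul_one] at hφB
  linarith

end Descent

lemma norm_fderiv_sub_fderiv_eq_norm_gradient_sub_gradient {E : Type*} [NormedAddCommGroup E]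
    [InnerProductSpace ℝ E] [CompleteSpace E] (f : E → ℝ) (x y : E) :
    ‖fderiv ℝ f x - fderiv ℝ f y‖ = ‖gradient f x - gradient f y‖ := by
  rw [← toDual_gradient, ← toDual_gradient, ← map_sub, LinearIsometryEquiv.norm_map]

theorem one_gradient_step_error_general
    {E : Type*} [NormedAddCommGroup E] [InnerProductSpace ℝ E] [CompleteSpace E]
    (f : E → ℝ) (hf : Differentiable ℝ f)
    (γ : ℝ)
    (hlip : ∀ x y : E, ‖gradient f x - gradient f y‖ ≤ γ * ‖x - y‖)
    (θ v : E) (μ : ℝ) (hμ : 0 < μ) (hμγ : μ ≤ 1 / γ) :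
    f (θ - μ • v) - f θ ≤
      -(μ / 2) * (‖gradient f θ‖ ^ 2 - ‖v - gradient f θ‖ ^ 2) := by
  have hγ : 0 < γ := one_div_pos.mp (hμ.trans_le hμγ)
  have hγμ : γ * μ ≤ 1 := by rwa [le_div_iff₀ hγ, mul_comm] at hμγ
  have hdescent := sub_le_fderiv_add_of_lipschitz_fderiv hf
    (fun x y => (norm_fderiv_sub_fderiv_eq_norm_gradient_sub_gradient f x y).trans_le (hlip x y))
    θ (-(μ • v))
  rw [← sub_eq_add_neg, ← inner_gradient_left, inner_neg_right, real_inner_smul_right,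
    norm_neg, norm_smul, Real.norm_of_nonneg hμ.le] at hdescent
  have hexpand : ‖v - gradient f θ‖ ^ 2 =
      ‖v‖ ^ 2 - 2 * ⟪gradient f θ, v⟫_ℝ + ‖gradient f θ‖ ^ 2 := by
    rw [norm_sub_sq_real, real_inner_comm]
  have hquad : γ / 2 * (μ * ‖v‖) ^ 2 ≤ μ / 2 * ‖v‖ ^ 2 := by
    have := mul_le_mul_of_nonneg_right hγμ (by positivity : 0 ≤ μ / 2 * ‖v‖ ^ 2)
    linarith
  rw [hexpand]
  linarith

/-- Pointwise core of Theorem A.2 ('error of one gradient step'):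
for a differentiable `f : E → ℝ` on a real Hilbert space with `γ`-Lipschitz gradient,
any step `θ ↦ θ - μ • v` with `0 < μ ≤ 1/γ` satisfies the descent-type inequality. -/
theorem one_gradient_step_error
    {E : Type*} [NormedAddCommGroup E] [InnerProductSpace ℝ E] [CompleteSpace E]
    (f : E → ℝ) (hf : Differentiable ℝ f)
    (γ : ℝ) (hγ : 0 < γ)
    (hlip : ∀ x y : E, ‖gradient f x - gradient f y‖ ≤ γ * ‖x - y‖)
    (θ v : E) (μ : ℝ) (hμ : 0 < μ) (hμγ : μ ≤ 1 / γ) :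
    f (θ - μ • v) - f θ ≤
      -(μ / 2) * (‖gradient f θ‖ ^ 2 - ‖v - gradient f θ‖ ^ 2) :=
  one_gradient_step_error_general f hf γ hlip θ v μ hμ hμγ
end

section
/- Let E be a real Hilbert space, γ > 0, and 0 < μ ≤ 1/γ. Let (L_t)_{t ∈ ℕ} be a sequence of differentiable functions L_t : E → ℝ whose gradients ∇L_t are all γ-Lipschitz, let (v_t)_{t ∈ ℕ} be a sequence in E, and define θ_{t+1} := θ_t − μ·v_t from an initial point θ_0 ∈ E. Assume that for every t, L_{t+1}(θ_{t+1}) ≤ L_t(θ_{t+1}). Then for every T ≥ 1, L_T(θ_T) − L_0(θ_0) ≤ −(μ/2)·Σ_{t=0}^{T−1} ( ‖∇L_t(θ_t)‖² − ‖v_t − ∇L_t(θ_t)‖² ). (Telescoping descent inequality for gradient descent with time-varying loss functions, from the proof of the convergence theorem.) -/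
/-!
By the descent lemma, the step `θ t ↦ θ t - μ • v t` decreases `L t` by at least
`(μ / 2) (‖∇L_t(θ_t)‖² - ‖v_t - ∇L_t(θ_t)‖²)` once `γ μ ≤ 1`; the hypothesis `hmono` transfers this
decrease to `L (t + 1)`, and summing over `t < T` telescopes.
-/

open Finset

/-- Descent lemma. The gap `f (x + s • d) - f x - s * f' x d - γ / 2 * s ^ 2 * ‖d‖ ^ 2` has
derivative `(f' (x + s • d) - f' x) d - γ * s * ‖d‖ ^ 2 ≤ 0` for `s ≥ 0`, so it decreases on
`[0, 1]` from its value `0` at `s = 0`. -/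
theorem image_add_le_of_lipschitz_fderiv {E : Type*} [NormedAddCommGroup E] [NormedSpace ℝ E]
    {f : E → ℝ} {f' : E → E →L[ℝ] ℝ} {γ : ℝ} (hf : ∀ x, HasFDerivAt f (f' x) x)
    (hlip : ∀ x y, ‖f' x - f' y‖ ≤ γ * ‖x - y‖) (x d : E) :
    f (x + d) ≤ f x + f' x d + γ / 2 * ‖d‖ ^ 2 := by
  set gap : ℝ → ℝ := fun s ↦ f (x + s • d) - s * f' x d - γ / 2 * s ^ 2 * ‖d‖ ^ 2
  have hgap : ∀ s, HasDerivAt gap (f' (x + s • d) d - f' x d - γ * s * ‖d‖ ^ 2) s := by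
    intro s
    have hline : HasDerivAt (fun s : ℝ ↦ x + s • d) d s := by
      simpa using ((hasDerivAt_id s).smul_const d).const_add x
    have hquad : HasDerivAt (fun s : ℝ ↦ γ / 2 * s ^ 2 * ‖d‖ ^ 2) (γ * s * ‖d‖ ^ 2) s := by
      exact (((hasDerivAt_pow 2 s).const_mul (γ / 2)).mul_const (‖d‖ ^ 2)).congr_deriv (by ring)
    exact (((hf _).comp_hasDerivAt s hline).sub ((hasDerivAt_id s).mul_const _)).sub hquad
      |>.congr_deriv (by simp)
  have hslope : ∀ s, 0 ≤ s → f' (x + s • d) d - f' x d ≤ γ * s * ‖d‖ ^ 2 := by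
    intro s hs
    calc f' (x + s • d) d - f' x d = (f' (x + s • d) - f' x) d := rfl
      _ ≤ ‖f' (x + s • d) - f' x‖ * ‖d‖ := (Real.le_norm_self _).trans (ContinuousLinearMap.le_opNorm _ _)
      _ ≤ γ * ‖x + s • d - x‖ * ‖d‖ := by gcongr; exact hlip _ _
      _ = γ * s * ‖d‖ ^ 2 := by
        rw [add_sub_cancel_left, norm_smul, Real.norm_of_nonneg hs]; ring
  have hanti : AntitoneOn gap (Set.Icc 0 1) := by
    refine antitoneOn_of_deriv_nonpos (convex_Icc 0 1)
      (fun s _ ↦ (hgap s).continuousAt.continuousWithinAt)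
      (fun s _ ↦ (hgap s).differentiableAt.differentiableWithinAt) fun s hs ↦ ?_
    rw [interior_Icc] at hs
    rw [(hgap s).deriv]
    linarith [hslope s hs.1.le]
  have := hanti (by norm_num) (by norm_num) zero_le_one
  simp only [gap, one_smul, zero_smul, add_zero] at this
  linarith

theorem image_add_le_of_lipschitz_gradient {E : Type*} [NormedAddCommGroup E]
    [InnerProductSpace ℝ E] [CompleteSpace E] {f : E → ℝ} {γ : ℝ} (hf : Differentiable ℝ f)
    (hlip : ∀ x y, ‖gradient f x - gradient f y‖ ≤ γ * ‖x - y‖) (x d : E) :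
    f (x + d) ≤ f x + inner ℝ (gradient f x) d + γ / 2 * ‖d‖ ^ 2 :=
  image_add_le_of_lipschitz_fderiv (fun x ↦ (hf x).hasGradientAt.hasFDerivAt)
    (fun x y ↦ by simpa only [← map_sub, LinearIsometryEquiv.norm_map] using hlip x y) x d

theorem image_sub_smul_sub_le_of_lipschitz_gradient {E : Type*} [NormedAddCommGroup E]
    [InnerProductSpace ℝ E] [CompleteSpace E] {f : E → ℝ} {γ μ : ℝ} (hf : Differentiable ℝ f)
    (hlip : ∀ x y, ‖gradient f x - gradient f y‖ ≤ γ * ‖x - y‖) (hμ : 0 ≤ μ) (hγμ : γ * μ ≤ 1)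
    (x v : E) :
    f (x - μ • v) - f x ≤ -(μ / 2) * (‖gradient f x‖ ^ 2 - ‖v - gradient f x‖ ^ 2) := by
  set g := gradient f x
  have hdesc := image_add_le_of_lipschitz_gradient hf hlip x (-(μ • v))
  rw [← sub_eq_add_neg, inner_neg_right, real_inner_smul_right, norm_neg, norm_smul,
    Real.norm_of_nonneg hμ] at hdesc
  have hstep : γ / 2 * (μ * ‖v‖) ^ 2 ≤ μ / 2 * ‖v‖ ^ 2 := by
    have : 0 ≤ μ * ‖v‖ ^ 2 := by positivity
    nlinarith
  have hpolar : ‖v - g‖ ^ 2 = ‖v‖ ^ 2 - 2 * inner ℝ g v + ‖g‖ ^ 2 := by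
    rw [norm_sub_sq_real, real_inner_comm]
  rw [hpolar]
  linarith

theorem telescoping_descent_general
    {E : Type*} [NormedAddCommGroup E] [InnerProductSpace ℝ E] [CompleteSpace E]
    (γ : ℝ) (hγ : 0 < γ) (μ : ℝ) (hμ : 0 < μ) (hμγ : μ ≤ 1 / γ)
    (L : ℕ → E → ℝ) (hL : ∀ t, Differentiable ℝ (L t))
    (hlip : ∀ t, ∀ x y : E, ‖gradient (L t) x - gradient (L t) y‖ ≤ γ * ‖x - y‖)
    (v : ℕ → E) (θ : ℕ → E)
    (hθ : ∀ t, θ (t + 1) = θ t - μ • v t)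
    (hmono : ∀ t, L (t + 1) (θ (t + 1)) ≤ L t (θ (t + 1)))
    (T : ℕ) :
    L T (θ T) - L 0 (θ 0) ≤
      -(μ / 2) * ∑ t ∈ Finset.range T,
        (‖gradient (L t) (θ t)‖ ^ 2 - ‖v t - gradient (L t) (θ t)‖ ^ 2) := by
  have hγμ : γ * μ ≤ 1 := by rwa [le_div_iff₀ hγ, mul_comm] at hμγ
  have hstep : ∀ t, L (t + 1) (θ (t + 1)) - L t (θ t) ≤
      -(μ / 2) * (‖gradient (L t) (θ t)‖ ^ 2 - ‖v t - gradient (L t) (θ t)‖ ^ 2) := by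
    intro t
    have := image_sub_smul_sub_le_of_lipschitz_gradient (hL t) (hlip t) hμ.le hγμ (θ t) (v t)
    rw [← hθ] at this
    linarith [hmono t]
  rw [← sum_range_sub (fun t ↦ L t (θ t)), mul_sum]
  exact sum_le_sum fun t _ ↦ hstep t

/-- Telescoping descent inequality for gradient descent with time-varying loss
functions (from the proof of the convergence theorem). -/
theorem telescoping_descent
    {E : Type*} [NormedAddCommGroup E] [InnerProductSpace ℝ E] [CompleteSpace E]
    (γ : ℝ) (hγ : 0 < γ) (μ : ℝ) (hμ : 0 < μ) (hμγ : μ ≤ 1 / γ)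
    (L : ℕ → E → ℝ) (hL : ∀ t, Differentiable ℝ (L t))
    (hlip : ∀ t, ∀ x y : E, ‖gradient (L t) x - gradient (L t) y‖ ≤ γ * ‖x - y‖)
    (v : ℕ → E) (θ : ℕ → E)
    (hθ : ∀ t, θ (t + 1) = θ t - μ • v t)
    (hmono : ∀ t, L (t + 1) (θ (t + 1)) ≤ L t (θ (t + 1)))
    (T : ℕ) (hT : 1 ≤ T) :
    L T (θ T) - L 0 (θ 0) ≤
      -(μ / 2) * ∑ t ∈ Finset.range T,
        (‖gradient (L t) (θ t)‖ ^ 2 - ‖v t - gradient (L t) (θ t)‖ ^ 2) :=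
  telescoping_descent_general γ hγ μ hμ hμγ L hL hlip v θ hθ hmono T
end

section
/- Let E be a real Hilbert space, γ > 0, and 0 < μ ≤ 1/γ. Let (L_t)_{t ∈ ℕ} be a sequence of nonnegative differentiable functions L_t : E → ℝ whose gradients ∇L_t are all γ-Lipschitz, let (v_t)_{t ∈ ℕ} be a sequence in E, and define θ_{t+1} := θ_t − μ·v_t from an initial point θ_0 ∈ E. Assume that for every t, L_{t+1}(θ_{t+1}) ≤ L_t(θ_{t+1}). Then for every T ≥ 1, (1/T)·Σ_{t=0}^{T−1} ‖∇L_t(θ_t)‖² ≤ 2·L_0(θ_0)/(μ·T) + (1/T)·Σ_{t=0}^{T−1} ‖v_t − ∇L_t(θ_t)‖². (Averaged gradient-norm bound: the mean squared gradient norm along the trajectory is bounded by an O(1/T) term plus the average squared deviation of the updates from the true gradients.) -/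
/-!
The descent lemma for a `γ`-smooth function gives, for the step `θ ↦ θ - μ v` with `γ μ ≤ 1`,
`L(θ - μ v) ≤ L(θ) - μ/2 ‖∇L(θ)‖² + μ/2 ‖v - ∇L(θ)‖²`.
Chaining through `L_{t+1}(θ_{t+1}) ≤ L_t(θ_{t+1})` and telescoping, the sum of the
`μ/2 ‖∇L_t(θ_t)‖²` is bounded by `L_0(θ_0) - L_T(θ_T) ≤ L_0(θ_0)` plus the sum of the
`μ/2 ‖v_t - ∇L_t(θ_t)‖²`.
-/

open Finset
open scoped InnerProductSpace

section GradientLipschitz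

variable {E : Type*} [NormedAddCommGroup E] [InnerProductSpace ℝ E] [CompleteSpace E]
  {f : E → ℝ} {f' : E → E} {γ : ℝ}

theorem apply_add_le_of_gradient_lipschitz (hf : ∀ x, HasGradientAt f (f' x) x)
    (hlip : ∀ x y, ‖f' x - f' y‖ ≤ γ * ‖x - y‖) (x u : E) :
    f (x + u) ≤ f x + ⟪f' x, u⟫_ℝ + γ / 2 * ‖u‖ ^ 2 := by
  set φ : ℝ → ℝ := fun s ↦ f (x + s • u) - s * ⟪f' x, u⟫_ℝ - γ / 2 * s ^ 2 * ‖u‖ ^ 2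
  set φ' : ℝ → ℝ := fun s ↦ ⟪f' (x + s • u), u⟫_ℝ - ⟪f' x, u⟫_ℝ - γ * s * ‖u‖ ^ 2
  have hφ : ∀ s, HasDerivAt φ (φ' s) s := by
    intro s
    have hline : HasDerivAt (fun s : ℝ ↦ x + s • u) u s := by
      simpa using ((hasDerivAt_id s).smul_const u).const_add x
    have hf_line := (hf (x + s • u)).hasFDerivAt.comp_hasDerivAt s hline
    have hsq := ((hasDerivAt_pow 2 s).const_mul (γ / 2)).mul_const (‖u‖ ^ 2)
    refine ((hf_line.sub ((hasDerivAt_id s).mul_const ⟪f' x, u⟫_ℝ)).sub hsq).congr_deriv ?_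
    simp only [φ', InnerProductSpace.toDual_apply_apply]
    ring
  have hφ'_nonpos : ∀ s ∈ interior (Set.Ici (0 : ℝ)), φ' s ≤ 0 := by
    intro s hs
    rw [interior_Ici, Set.mem_Ioi] at hs
    have hgrad_diff : ⟪f' (x + s • u) - f' x, u⟫_ℝ ≤ γ * s * ‖u‖ ^ 2 :=
      calc ⟪f' (x + s • u) - f' x, u⟫_ℝ
          ≤ ‖f' (x + s • u) - f' x‖ * ‖u‖ := real_inner_le_norm _ _
        _ ≤ γ * ‖x + s • u - x‖ * ‖u‖ := by gcongr; exact hlip _ _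
        _ = γ * s * ‖u‖ ^ 2 := by
          rw [add_sub_cancel_left, norm_smul, Real.norm_of_nonneg hs.le]; ring
    rw [inner_sub_left] at hgrad_diff
    simp only [φ']
    linarith
  have hanti : AntitoneOn φ (Set.Ici 0) :=
    antitoneOn_of_hasDerivWithinAt_nonpos (convex_Ici 0)
      (fun s _ ↦ (hφ s).continuousAt.continuousWithinAt)
      (fun s _ ↦ (hφ s).hasDerivWithinAt) hφ'_nonpos
  have h01 := hanti Set.self_mem_Ici (Set.mem_Ici.2 zero_le_one) zero_le_one
  simp only [φ, zero_smul, add_zero, one_smul, zero_mul, sub_zero, one_mul, one_pow] at h01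
  linarith

theorem apply_sub_smul_le_of_gradient_lipschitz (hf : ∀ x, HasGradientAt f (f' x) x)
    (hlip : ∀ x y, ‖f' x - f' y‖ ≤ γ * ‖x - y‖) {μ : ℝ} (hμ : 0 ≤ μ) (hγμ : γ * μ ≤ 1)
    (x v : E) :
    f (x - μ • v) ≤ f x - μ / 2 * ‖f' x‖ ^ 2 + μ / 2 * ‖v - f' x‖ ^ 2 := by
  have h := apply_add_le_of_gradient_lipschitz hf hlip x (-(μ • v))
  rw [← sub_eq_add_neg, inner_neg_right, real_inner_smul_right, norm_neg, norm_smul,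
    Real.norm_of_nonneg hμ] at h
  rw [norm_sub_sq_real, real_inner_comm]
  nlinarith [mul_nonneg (mul_nonneg hμ (sq_nonneg ‖v‖)) (sub_nonneg.2 hγμ)]

end GradientLipschitz

theorem sum_range_le_of_le_sub_add {a b c : ℕ → ℝ} (h : ∀ t, a (t + 1) ≤ a t - b t + c t)
    (T : ℕ) (ha : 0 ≤ a T) :
    ∑ t ∈ range T, b t ≤ a 0 + ∑ t ∈ range T, c t := by
  have hsum : ∑ t ∈ range T, (b t - c t) ≤ ∑ t ∈ range T, (a t - a (t + 1)) :=
    sum_le_sum fun t _ ↦ by linarith [h t]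
  rw [sum_range_sub', sum_sub_distrib] at hsum
  linarith

theorem averaged_gradient_norm_bound_general
    {E : Type*} [NormedAddCommGroup E] [InnerProductSpace ℝ E] [CompleteSpace E]
    (γ : ℝ) (μ : ℝ) (hμ : 0 < μ) (hμγ : μ ≤ 1 / γ)
    (L : ℕ → E → ℝ) (hL : ∀ t, Differentiable ℝ (L t))
    (hL0 : ∀ t x, 0 ≤ L t x)
    (hlip : ∀ t, ∀ x y : E, ‖gradient (L t) x - gradient (L t) y‖ ≤ γ * ‖x - y‖)
    (v : ℕ → E) (θ : ℕ → E)
    (hθ : ∀ t, θ (t + 1) = θ t - μ • v t)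
    (hmono : ∀ t, L (t + 1) (θ (t + 1)) ≤ L t (θ (t + 1)))
    (T : ℕ) :
    (1 / (T : ℝ)) * ∑ t ∈ Finset.range T, ‖gradient (L t) (θ t)‖ ^ 2 ≤
      2 * L 0 (θ 0) / (μ * T)
        + (1 / (T : ℝ)) * ∑ t ∈ Finset.range T, ‖v t - gradient (L t) (θ t)‖ ^ 2 := by
  have hγμ : γ * μ ≤ 1 := by
    rwa [le_div_iff₀ (one_div_pos.mp (hμ.trans_le hμγ)), mul_comm] at hμγ
  have hstep : ∀ t, L (t + 1) (θ (t + 1)) ≤ L t (θ t) - μ / 2 * ‖gradient (L t) (θ t)‖ ^ 2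
      + μ / 2 * ‖v t - gradient (L t) (θ t)‖ ^ 2 := fun t ↦ by
    refine (hmono t).trans ?_
    rw [hθ t]
    exact apply_sub_smul_le_of_gradient_lipschitz (fun x ↦ (hL t x).hasGradientAt) (hlip t)
      hμ.le hγμ (θ t) (v t)
  have hsum := sum_range_le_of_le_sub_add (a := fun t ↦ L t (θ t)) hstep T (hL0 T (θ T))
  rw [← mul_sum, ← mul_sum] at hsum
  have hbound : ∑ t ∈ range T, ‖gradient (L t) (θ t)‖ ^ 2 ≤
      2 * L 0 (θ 0) / μ + ∑ t ∈ range T, ‖v t - gradient (L t) (θ t)‖ ^ 2 := by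
    rw [div_add' _ _ _ hμ.ne', le_div_iff₀ hμ]
    linarith
  calc (1 / (T : ℝ)) * ∑ t ∈ range T, ‖gradient (L t) (θ t)‖ ^ 2
      ≤ (1 / (T : ℝ)) * (2 * L 0 (θ 0) / μ
          + ∑ t ∈ range T, ‖v t - gradient (L t) (θ t)‖ ^ 2) := by gcongr
    _ = _ := by ring

/-- Averaged gradient-norm bound: the mean squared gradient norm along the trajectory
is bounded by an `O(1/T)` term plus the average squared deviation of the updates from
the true gradients. -/
theorem averaged_gradient_norm_bound
    {E : Type*} [NormedAddCommGroup E] [InnerProductSpace ℝ E] [CompleteSpace E]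
    (γ : ℝ) (hγ : 0 < γ) (μ : ℝ) (hμ : 0 < μ) (hμγ : μ ≤ 1 / γ)
    (L : ℕ → E → ℝ) (hL : ∀ t, Differentiable ℝ (L t))
    (hL0 : ∀ t x, 0 ≤ L t x)
    (hlip : ∀ t, ∀ x y : E, ‖gradient (L t) x - gradient (L t) y‖ ≤ γ * ‖x - y‖)
    (v : ℕ → E) (θ : ℕ → E)
    (hθ : ∀ t, θ (t + 1) = θ t - μ • v t)
    (hmono : ∀ t, L (t + 1) (θ (t + 1)) ≤ L t (θ (t + 1)))
    (T : ℕ) (hT : 1 ≤ T) :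
    (1 / (T : ℝ)) * ∑ t ∈ Finset.range T, ‖gradient (L t) (θ t)‖ ^ 2 ≤
      2 * L 0 (θ 0) / (μ * T)
        + (1 / (T : ℝ)) * ∑ t ∈ Finset.range T, ‖v t - gradient (L t) (θ t)‖ ^ 2 :=
  averaged_gradient_norm_bound_general γ μ hμ hμγ L hL hL0 hlip v θ hθ hmono T
end
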